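/- Let (Ω, F, P) be a probability space, let τ_1 : [0,1] → ℝ be continuous and injective, let τ_2 : [0,1] → ℝ be any function, and let G be a random warping function on (Ω, F, P) such that for every t ∈ [0,1] the random variable G(·,t) is integrable with E[G(·,t)] = t. If for every t ∈ [0,1] one has τ_1(G(ω,t)) = τ_2(t) for P-almost every ω, then τ_1 = τ_2 on [0,1], and for every t ∈ [0,1], G(·,t) = t P-almost surely. -/

import Mathlib

open MeasureTheory Set

/-! If `τ₁` is injective on `[0,1]`, then `τ₁(G(·,t)) = τ₂(t)` a.s. forces `G(·,t)` to be
a.s. equal to a constant `a` with `τ₁ a = τ₂ t`; the constant is then the mean of `G(·,t)`,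
which is `t`. -/

section

variable {Ω E β : Type*} [MeasurableSpace Ω] {μ : Measure Ω} {f : E → β} {s : Set E}
  {X : Ω → E} {c : β}

theorem exists_ae_eq_const_of_injOn_of_ae_comp_eq [NeZero μ] (hf : InjOn f s)
    (hX : ∀ᵐ ω ∂μ, X ω ∈ s) (h : ∀ᵐ ω ∂μ, f (X ω) = c) :
    ∃ a, f a = c ∧ ∀ᵐ ω ∂μ, X ω = a := by
  obtain ⟨ω₀, hω₀s, hω₀c⟩ := (hX.and h).exists
  refine ⟨X ω₀, hω₀c, ?_⟩
  filter_upwards [hX, h] with ω hωs hωc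
  exact hf hωs hω₀s (hωc.trans hω₀c.symm)

theorem comp_integral_eq_and_ae_eq_integral_of_injOn [NormedAddCommGroup E]
    [NormedSpace ℝ E] [CompleteSpace E] [IsProbabilityMeasure μ] (hf : InjOn f s) (hX : ∀ᵐ ω ∂μ, X ω ∈ s) (h : ∀ᵐ ω ∂μ, f (X ω) = c) :
    f (∫ ω, X ω ∂μ) = c ∧ ∀ᵐ ω ∂μ, X ω = ∫ ω, X ω ∂μ := by
  obtain ⟨a, hac, hXa⟩ := exists_ae_eq_const_of_injOn_of_ae_comp_eq hf hX h
  rw [integral_eq_const hXa]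
  exact ⟨hac, hXa⟩

end

theorem identify_mean_curve_and_warping_general
    {Ω : Type*} [MeasurableSpace Ω] (P : Measure Ω) [IsProbabilityMeasure P]
    (τ₁ τ₂ : ℝ → ℝ)
    (hτ₁inj : Set.InjOn τ₁ (Set.Icc 0 1))
    (G : Ω → ℝ → ℝ)
    -- random warping function: measurable evaluations, with values in [0,1]
    (hGmaps : ∀ ω, Set.MapsTo (G ω) (Set.Icc 0 1) (Set.Icc 0 1))
    -- integrability and the normalization E[G(·,t)] = t
    (hGmean : ∀ t ∈ Set.Icc (0 : ℝ) 1, ∫ ω, G ω t ∂P = t)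
    -- the warped mean curve equals τ₂ almost surely, pointwise in t
    (heq : ∀ t ∈ Set.Icc (0 : ℝ) 1, ∀ᵐ ω ∂P, τ₁ (G ω t) = τ₂ t) :
    Set.EqOn τ₁ τ₂ (Set.Icc 0 1) ∧
      ∀ t ∈ Set.Icc (0 : ℝ) 1, ∀ᵐ ω ∂P, G ω t = t := by
  have key (t : ℝ) (ht : t ∈ Icc (0 : ℝ) 1) : τ₁ t = τ₂ t ∧ ∀ᵐ ω ∂P, G ω t = t := by
    have := comp_integral_eq_and_ae_eq_integral_of_injOn hτ₁inj
      (ae_of_all P fun ω => hGmaps ω ht) (heq t ht)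
    rwa [hGmean t ht] at this
  exact ⟨fun t ht => (key t ht).1, fun t ht => (key t ht).2⟩

/-- Identification of the mean curve and the warping function when the warped mean
curve is observed exactly: if `τ₁(G(ω,t)) = τ₂(t)` almost surely for every `t ∈ [0,1]`,
where `τ₁` is continuous and injective on `[0,1]` and `E[G(·,t)] = t`, then `τ₁ = τ₂`
on `[0,1]` and `G(·,t) = t` almost surely for every `t ∈ [0,1]`. -/
theorem identify_mean_curve_and_warping
    {Ω : Type*} [MeasurableSpace Ω] (P : Measure Ω) [IsProbabilityMeasure P]
    (τ₁ τ₂ : ℝ → ℝ)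
    (hτ₁c : ContinuousOn τ₁ (Set.Icc 0 1)) (hτ₁inj : Set.InjOn τ₁ (Set.Icc 0 1))
    (G : Ω → ℝ → ℝ)
    -- random warping function: measurable evaluations, with values in [0,1]
    (hGmeas : ∀ t ∈ Set.Icc (0 : ℝ) 1, Measurable fun ω => G ω t)
    (hGmaps : ∀ ω, Set.MapsTo (G ω) (Set.Icc 0 1) (Set.Icc 0 1))
    -- integrability and the normalization E[G(·,t)] = t
    (hGint : ∀ t ∈ Set.Icc (0 : ℝ) 1, Integrable (fun ω => G ω t) P)
    (hGmean : ∀ t ∈ Set.Icc (0 : ℝ) 1, ∫ ω, G ω t ∂P = t)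
    -- the warped mean curve equals τ₂ almost surely, pointwise in t
    (heq : ∀ t ∈ Set.Icc (0 : ℝ) 1, ∀ᵐ ω ∂P, τ₁ (G ω t) = τ₂ t) :
    Set.EqOn τ₁ τ₂ (Set.Icc 0 1) ∧
      ∀ t ∈ Set.Icc (0 : ℝ) 1, ∀ᵐ ω ∂P, G ω t = t :=
  identify_mean_curve_and_warping_general P τ₁ τ₂ hτ₁inj G hGmaps hGmean heq
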